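/- arXiv:2204.06368 — 6 statements merged into one kernel-verified Lean document; each statement's English description precedes it below -/
import Mathlib

section
/- Let $k$ be a field of characteristic $\neq 2$. Then for any $r \geq 1$, the Pfister form $\langle\langle x_1, \ldots, x_r \rangle\rangle$ is anisotropic over $k(x_1, \ldots, x_r)$. -/
/-!
Clearing denominators reduces the claim to polynomials, and adjoining the variables one at a
time reduces it to: if a diagonal form `q` over a commutative ring `A` is anisotropic, then so is
`q ⊥ X·q` over `A[X]`. If `q(p) + X·q(p') = 0`, the constant term gives `q(p(0)) = 0`, so `X ∣ p`,
and cancelling `X` gives `q(p') + X·q(p/X) = 0`, a relation of the same shape. Applying this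
twice shifts all coefficients down by one, so every coefficient of `p`, and then of `p'`, vanishes.
-/

/-- A diagonal quadratic form (given by its diagonal entries `d`) is anisotropic. -/
def Anisotropic {F : Type*} [Field F] {ι : Type*} [Fintype ι] (d : ι → F) : Prop :=
  ∀ w : ι → F, ∑ i, d i * w i ^ 2 = 0 → w = 0

open Polynomial

def AnisotropicOn {R ι : Type*} [CommRing R] (s : Finset ι) (d : ι → R) : Prop :=
  ∀ w : ι → R, ∑ i ∈ s, d i * w i ^ 2 = 0 → ∀ i ∈ s, w i = 0

namespace AnisotropicOn

variable {A ι : Type*} [CommRing A] {s : Finset ι} {d : ι → A}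

lemma coeff_zero_eq_zero_of_add_X_mul_eq_zero (hd : AnisotropicOn s d) {p q : ι → A[X]}
    (h : ∑ i ∈ s, C (d i) * p i ^ 2 + X * ∑ i ∈ s, C (d i) * q i ^ 2 = 0) :
    ∀ i ∈ s, (p i).coeff 0 = 0 := by
  have h0 := congrArg constantCoeff h
  simp only [map_add, map_mul, map_sum, map_pow, constantCoeff_apply, coeff_C_zero,
    coeff_X_zero, zero_mul, add_zero, map_zero] at h0
  exact hd _ h0

lemma add_X_mul_divX_eq_zero (hd : AnisotropicOn s d) {p q : ι → A[X]}
    (h : ∑ i ∈ s, C (d i) * p i ^ 2 + X * ∑ i ∈ s, C (d i) * q i ^ 2 = 0) :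
    ∑ i ∈ s, C (d i) * q i ^ 2 + X * ∑ i ∈ s, C (d i) * (p i).divX ^ 2 = 0 := by
  have hp : ∀ i ∈ s, p i = X * (p i).divX := fun i hi => by
    conv_lhs => rw [← (p i).X_mul_divX_add,
      hd.coeff_zero_eq_zero_of_add_X_mul_eq_zero h i hi, C_0, add_zero]
  have hsum : ∑ i ∈ s, C (d i) * p i ^ 2 = X ^ 2 * ∑ i ∈ s, C (d i) * (p i).divX ^ 2 := by
    rw [Finset.mul_sum]
    refine Finset.sum_congr rfl fun i hi => ?_
    conv_lhs => rw [hp i hi]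
    ring
  refine isRegular_X.left (show X * _ = X * 0 from ?_)
  rw [mul_zero, ← h, hsum]
  ring

lemma coeff_eq_zero_of_add_X_mul_eq_zero (hd : AnisotropicOn s d) (n : ℕ) :
    ∀ {p q : ι → A[X]}, ∑ i ∈ s, C (d i) * p i ^ 2 + X * ∑ i ∈ s, C (d i) * q i ^ 2 = 0 →
      ∀ i ∈ s, (p i).coeff n = 0 := by
  induction n with
  | zero => exact hd.coeff_zero_eq_zero_of_add_X_mul_eq_zero
  | succ n ih =>
    intro p q h i hi
    rw [← coeff_divX]
    exact ih (hd.add_X_mul_divX_eq_zero (hd.add_X_mul_divX_eq_zero h)) i hi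

lemma eq_zero_of_add_X_mul_eq_zero (hd : AnisotropicOn s d) {p q : ι → A[X]}
    (h : ∑ i ∈ s, C (d i) * p i ^ 2 + X * ∑ i ∈ s, C (d i) * q i ^ 2 = 0) :
    ∀ i ∈ s, p i = 0 ∧ q i = 0 := fun i hi =>
  ⟨Polynomial.ext fun n => hd.coeff_eq_zero_of_add_X_mul_eq_zero n h i hi,
    Polynomial.ext fun n =>
      hd.coeff_eq_zero_of_add_X_mul_eq_zero n (hd.add_X_mul_divX_eq_zero h) i hi⟩

lemma anisotropic_algebraMap {R K : Type*} [CommRing R] [Field K] [Algebra R K]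
    [IsFractionRing R K] [Fintype ι] {d : ι → R} (hd : AnisotropicOn Finset.univ d) :
    Anisotropic fun i => algebraMap R K (d i) := by
  intro w hw
  obtain ⟨b, hb⟩ := IsLocalization.exist_integer_multiples_of_finite (nonZeroDivisors R) w
  choose a ha using hb
  have hsum : ∑ i, d i * a i ^ 2 = 0 := by
    apply IsFractionRing.injective R K
    simp only [map_sum, map_mul, map_pow, ha, Algebra.smul_def, map_zero]
    calc ∑ i, algebraMap R K (d i) * (algebraMap R K b * w i) ^ 2
        = algebraMap R K b ^ 2 * ∑ i, algebraMap R K (d i) * w i ^ 2 := by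
          rw [Finset.mul_sum]; exact Finset.sum_congr rfl fun i _ => by ring
      _ = 0 := by rw [hw, mul_zero]
  funext i
  have hbw : algebraMap R K b * w i = 0 := by
    rw [← Algebra.smul_def, ← ha, hd a hsum i (Finset.mem_univ i), map_zero]
  exact (IsLocalization.map_units K b).mul_right_eq_zero.mp hbw

end AnisotropicOn

namespace MvPolynomial

variable {σ R : Type*} [CommRing R]

section

variable [DecidableEq σ]

/-- `f` viewed as a polynomial in `X a`. The coefficient ring still contains `X a`; all that
matters is that the map is injective and sends every other variable to a constant. -/
noncomputable def polynomialIn (a : σ) : MvPolynomial σ R →+* (MvPolynomial σ R)[X] :=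
  eval₂Hom (Polynomial.C.comp C) (Function.update (fun j => Polynomial.C (X j)) a Polynomial.X)

lemma polynomialIn_X_self (a : σ) :
    polynomialIn a (X a : MvPolynomial σ R) = Polynomial.X := by
  simp [polynomialIn]

lemma polynomialIn_X_of_ne {a j : σ} (h : j ≠ a) :
    polynomialIn a (X j : MvPolynomial σ R) = Polynomial.C (X j) := by
  simp [polynomialIn, Function.update_of_ne h]

lemma eval_polynomialIn (a : σ) (f : MvPolynomial σ R) : (polynomialIn a f).eval (X a) = f := by
  suffices (evalRingHom (X a)).comp (polynomialIn a) = RingHom.id (MvPolynomial σ R) from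
    RingHom.congr_fun this f
  refine ringHom_ext (fun r => by simp [polynomialIn]) fun j => ?_
  rcases eq_or_ne j a with rfl | h
  · simp [polynomialIn]
  · simp [polynomialIn_X_of_ne h]

lemma polynomialIn_injective (a : σ) : Function.Injective (polynomialIn (R := R) a) :=
  Function.LeftInverse.injective (eval_polynomialIn a)

lemma polynomialIn_prod_X_of_notMem {a : σ} {U : Finset σ} (ha : a ∉ U) :
    polynomialIn a (∏ i ∈ U, (X i : MvPolynomial σ R)) = Polynomial.C (∏ i ∈ U, X i) := by
  rw [map_prod, map_prod]
  exact Finset.prod_congr rfl fun i hi => polynomialIn_X_of_ne fun hia => ha (hia ▸ hi)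

lemma anisotropicOn_powerset_insert_prod_X {a : σ} {s : Finset σ} (ha : a ∉ s)
    (hs : AnisotropicOn s.powerset fun T => ∏ i ∈ T, (X i : MvPolynomial σ R)) :
    AnisotropicOn (insert a s).powerset fun T => ∏ i ∈ T, (X i : MvPolynomial σ R) := by
  intro w hw T hT
  beta_reduce at hw
  have haU : ∀ U ∈ s.powerset, a ∉ U := fun U hU h => ha (Finset.mem_powerset.mp hU h)
  have hX : ∑ U ∈ s.powerset, Polynomial.C (∏ i ∈ U, X i) * polynomialIn a (w U) ^ 2 +
      Polynomial.X * ∑ U ∈ s.powerset,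
        Polynomial.C (∏ i ∈ U, X i) * polynomialIn a (w (insert a U)) ^ 2 = 0 := by
    have h := congrArg (polynomialIn a) hw
    rw [Finset.sum_powerset_insert ha, map_add, map_sum, map_sum, map_zero] at h
    rw [← h, Finset.mul_sum]
    congr 1 <;> refine Finset.sum_congr rfl fun U hU => ?_
    · rw [map_mul, map_pow, polynomialIn_prod_X_of_notMem (haU U hU)]
    · rw [map_mul, map_pow, Finset.prod_insert (haU U hU), map_mul,
        polynomialIn_prod_X_of_notMem (haU U hU), polynomialIn_X_self]
      ring
  have hzero := hs.eq_zero_of_add_X_mul_eq_zero hX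
  rw [Finset.powerset_insert, Finset.mem_union, Finset.mem_image] at hT
  apply polynomialIn_injective a
  rcases hT with hT | ⟨U, hU, rfl⟩
  · rw [(hzero T hT).1, map_zero]
  · rw [(hzero U hU).2, map_zero]

end

theorem anisotropicOn_powerset_prod_X [IsReduced R] (s : Finset σ) :
    AnisotropicOn s.powerset fun T => ∏ i ∈ T, (X i : MvPolynomial σ R) := by
  classical
  induction s using Finset.induction_on with
  | empty =>
    intro w hw T hT
    rw [Finset.mem_powerset, Finset.subset_empty] at hT
    subst hT
    simp only [Finset.powerset_empty, Finset.sum_singleton, Finset.prod_empty, one_mul] at hw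
    exact IsReduced.eq_zero _ ⟨2, hw⟩
  | insert a s ha ih => exact anisotropicOn_powerset_insert_prod_X ha ih

end MvPolynomial

theorem pfister_form_anisotropic_over_rational_function_field_general
    {k : Type*} [Field k] (r : ℕ) :
    Anisotropic (fun S : Finset (Fin r) =>
      ∏ i ∈ S, algebraMap (MvPolynomial (Fin r) k)
        (FractionRing (MvPolynomial (Fin r) k)) (MvPolynomial.X i)) := by
  have h := MvPolynomial.anisotropicOn_powerset_prod_X (R := k) (Finset.univ : Finset (Fin r))
  rw [Finset.powerset_univ] at h
  simpa only [map_prod] using h.anisotropic_algebraMap (K := FractionRing (MvPolynomial (Fin r) k))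

/-- for `k` of characteristic `≠ 2` and `r ≥ 1`, the Pfister form
`⟨⟨x₁, …, x_r⟩⟩`, with diagonal entries `∏_{i ∈ S} x_i` for `S ⊆ {1, …, r}`,
is anisotropic over `k(x₁, …, x_r)`. -/
theorem pfister_form_anisotropic_over_rational_function_field
    {k : Type*} [Field k] (hk : (2 : k) ≠ 0) (r : ℕ) (hr : 1 ≤ r) :
    Anisotropic (fun S : Finset (Fin r) =>
      ∏ i ∈ S, algebraMap (MvPolynomial (Fin r) k)
        (FractionRing (MvPolynomial (Fin r) k)) (MvPolynomial.X i)) :=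
  pfister_form_anisotropic_over_rational_function_field_general r
end

section
/- Let $k$ be a field of characteristic $\neq 2$ and let $q$ be an anisotropic quadratic form over $k$ representing $1$, with $q \simeq \langle 1 \rangle \perp q'$. Then the quadratic form $\varphi_1 = \langle x_2 + 1, -x_2 \rangle \perp \langle 1, -x_2 \rangle \otimes q'$ is anisotropic over the Laurent series field $k((x_2))$. -/
namespace HahnSeries

section OrderedMonoid

variable {Γ R : Type*} [AddCommMonoid Γ] [LinearOrder Γ] [IsOrderedCancelAddMonoid Γ]

theorem coe_add_le_orderTop_mul [NonUnitalNonAssocSemiring R] {x y : R⟦Γ⟧} {a b : Γ}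
    (ha : (a : WithTop Γ) ≤ x.orderTop) (hb : (b : WithTop Γ) ≤ y.orderTop) :
    ((a + b : Γ) : WithTop Γ) ≤ (x * y).orderTop :=
  (WithTop.coe_add a b ▸ add_le_add ha hb).trans orderTop_add_le_mul

theorem coeff_mul_add_of_le_orderTop [NonUnitalNonAssocSemiring R] {x y : R⟦Γ⟧} {a b : Γ}
    (ha : (a : WithTop Γ) ≤ x.orderTop) (hb : (b : WithTop Γ) ≤ y.orderTop) :
    (x * y).coeff (a + b) = x.coeff a * y.coeff b := by
  rw [coeff_mul]
  refine Finset.sum_eq_single (a, b) (fun ij hij hne => ?_) (fun hab => ?_)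
  · rw [Finset.mem_antidiagonal, mem_support, mem_support] at hij
    obtain ⟨hi, hj, hij⟩ := hij
    have hai : a ≤ ij.1 := not_lt.mp fun h =>
      hi (coeff_eq_zero_of_lt_orderTop ((WithTop.coe_lt_coe.mpr h).trans_le ha))
    have hbj : b ≤ ij.2 := not_lt.mp fun h =>
      hj (coeff_eq_zero_of_lt_orderTop ((WithTop.coe_lt_coe.mpr h).trans_le hb))
    obtain ⟨rfl, rfl⟩ := (add_eq_add_iff_eq_and_eq hai hbj).mp hij.symm
    exact absurd rfl hne
  · simp only [Finset.mem_antidiagonal, mem_support, and_true, not_and_or, not_not] at hab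
    rcases hab with h | h <;> simp [h]

theorem coeff_mul_sq_add_of_le_orderTop [Semiring R] {x y : R⟦Γ⟧} {a b : Γ}
    (ha : (a : WithTop Γ) ≤ y.orderTop) (hb : (b : WithTop Γ) ≤ x.orderTop) :
    (y * x ^ 2).coeff (a + (b + b)) = y.coeff a * x.coeff b ^ 2 := by
  rw [sq, coeff_mul_add_of_le_orderTop ha (coe_add_le_orderTop_mul hb hb),
    coeff_mul_add_of_le_orderTop hb hb, sq]

theorem coeff_mul_sq_eq_zero_of_lt [Semiring R] {x y : R⟦Γ⟧} {a b c : Γ}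
    (ha : (a : WithTop Γ) ≤ y.orderTop) (hb : (b : WithTop Γ) ≤ x.orderTop)
    (hc : c < a + (b + b)) : (y * x ^ 2).coeff c = 0 := by
  rw [sq]
  exact coeff_eq_zero_of_lt_orderTop ((WithTop.coe_lt_coe.mpr hc).trans_le
    (coe_add_le_orderTop_mul ha (coe_add_le_orderTop_mul hb hb)))

end OrderedMonoid

theorem coe_order_le_orderTop {Γ R : Type*} [Zero Γ] [LinearOrder Γ] [Zero R] (x : R⟦Γ⟧) :
    (x.order : WithTop Γ) ≤ x.orderTop := by
  rcases eq_or_ne x 0 with rfl | hx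
  · simp
  · rw [order_eq_orderTop_of_ne_zero hx]

section Integers

variable {R : Type*} [Zero R]

theorem eq_zero_of_forall_le_orderTop {x : R⟦ℤ⟧} (h : ∀ m : ℤ, (m : WithTop ℤ) ≤ x.orderTop) :
    x = 0 :=
  orderTop_eq_top.mp (WithTop.eq_top_iff_forall_ge.mpr h)

theorem add_one_le_orderTop_of_coeff_eq_zero {x : R⟦ℤ⟧} {m : ℤ}
    (hm : (m : WithTop ℤ) ≤ x.orderTop) (hx : x.coeff m = 0) :
    ((m + 1 : ℤ) : WithTop ℤ) ≤ x.orderTop := by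
  rw [le_orderTop_iff_forall] at hm ⊢
  intro j hj
  rcases (Int.lt_add_one_iff.mp (WithTop.coe_lt_coe.mp hj)).lt_or_eq with h | rfl
  · exact hm j (WithTop.coe_lt_coe.mpr h)
  · exact hx

theorem eq_zero_of_le_orderTop_imp_add_one {ι : Type*} [Finite ι] {w : ι → R⟦ℤ⟧}
    (step : ∀ m : ℤ, (∀ i, (m : WithTop ℤ) ≤ (w i).orderTop) →
      ∀ i, ((m + 1 : ℤ) : WithTop ℤ) ≤ (w i).orderTop) : w = 0 := by
  obtain ⟨m₀, hm₀⟩ := Finite.exists_ge fun i => (w i).order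
  have hbound : ∀ m, m₀ ≤ m → ∀ i, (m : WithTop ℤ) ≤ (w i).orderTop := by
    refine Int.leInduction (fun i => ?_) fun m _ ih => step m ih
    exact (WithTop.coe_le_coe.mpr (hm₀ i)).trans (coe_order_le_orderTop _)
  funext i
  refine eq_zero_of_forall_le_orderTop fun m => ?_
  exact (WithTop.coe_le_coe.mpr (le_max_left m m₀)).trans (hbound _ (le_max_right m m₀) i)

end Integers

end HahnSeries

section Springer

open HahnSeries

variable {k : Type*} [Field k] {ι κ : Type*} [Fintype ι] [Fintype κ]

theorem Anisotropic.of_comp_equiv {d : ι → k} (e : κ ≃ ι) (h : Anisotropic (d ∘ e)) :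
    Anisotropic d := by
  intro w hw
  have hwe : w ∘ e = 0 := h (w ∘ e) ((e.sum_comp fun i => d i * w i ^ 2).trans hw)
  funext i
  simpa using congrFun hwe (e.symm i)

theorem Anisotropic.neg {d : ι → k} (h : Anisotropic d) : Anisotropic fun i => -d i :=
  fun w hw => h w (by simpa [neg_mul, Finset.sum_neg_distrib] using hw)

variable {u : ι → LaurentSeries k} {v : κ → LaurentSeries k}

theorem add_one_le_orderTop_of_sum_eq_zero (hu : ∀ i, 0 ≤ (u i).orderTop)
    (hv : ∀ j, 0 ≤ (v j).orderTop) (hu₀ : Anisotropic fun i => (u i).coeff 0)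
    (hv₀ : Anisotropic fun j => (v j).coeff 0) {w : ι ⊕ κ → LaurentSeries k}
    (hw : ∑ x, Sum.elim u (fun j => single 1 1 * v j) x * w x ^ 2 = 0) (m : ℤ)
    (hm : ∀ x, (m : WithTop ℤ) ≤ (w x).orderTop) (x : ι ⊕ κ) :
    ((m + 1 : ℤ) : WithTop ℤ) ≤ (w x).orderTop := by
  have hcoeff (c : ℤ) : ∑ i, (u i * w (.inl i) ^ 2).coeff c +
      ∑ j, (single 1 1 * v j * w (.inr j) ^ 2).coeff c = 0 := by
    simpa [Fintype.sum_sum_type, coeff_sum] using congrArg (coeff · c) hw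
  have hXv (j : κ) : ((1 : ℤ) : WithTop ℤ) ≤ (single 1 1 * v j).orderTop :=
    add_zero (1 : ℤ) ▸ coe_add_le_orderTop_mul orderTop_single_le (hv j)
  have hXv₁ (j : κ) : (single 1 1 * v j).coeff 1 = (v j).coeff 0 := by
    simpa using coeff_single_mul_add (a := 0) (b := (1 : ℤ)) (r := (1 : k)) (x := v j)
  have hι (i : ι) : (w (.inl i)).coeff m = 0 := by
    refine congrFun (hu₀ (fun i => (w (.inl i)).coeff m) ?_) i
    have h := hcoeff (m + m)
    rwa [Finset.sum_eq_zero fun j _ =>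
        coeff_mul_sq_eq_zero_of_lt (c := m + m) (hXv j) (hm _) (by omega),
      add_zero, ← zero_add (m + m),
      Finset.sum_congr rfl fun i _ => coeff_mul_sq_add_of_le_orderTop (hu i) (hm _)] at h
  have hι' (i : ι) : ((m + 1 : ℤ) : WithTop ℤ) ≤ (w (.inl i)).orderTop :=
    add_one_le_orderTop_of_coeff_eq_zero (hm _) (hι i)
  have hκ (j : κ) : (w (.inr j)).coeff m = 0 := by
    refine congrFun (hv₀ (fun j => (w (.inr j)).coeff m) ?_) j
    have h := hcoeff (1 + (m + m))
    rwa [Finset.sum_eq_zero fun i _ =>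
        coeff_mul_sq_eq_zero_of_lt (c := 1 + (m + m)) (hu i) (hι' _) (by omega),
      zero_add, Finset.sum_congr rfl fun j _ => coeff_mul_sq_add_of_le_orderTop (hXv j) (hm _),
      Finset.sum_congr rfl fun j _ => congrArg (· * _) (hXv₁ j)] at h
  rcases x with i | j
  · exact hι' i
  · exact add_one_le_orderTop_of_coeff_eq_zero (hm _) (hκ j)

theorem anisotropic_sumElim_single_one_mul (hu : ∀ i, 0 ≤ (u i).orderTop)
    (hv : ∀ j, 0 ≤ (v j).orderTop) (hu₀ : Anisotropic fun i => (u i).coeff 0)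
    (hv₀ : Anisotropic fun j => (v j).coeff 0) :
    Anisotropic (Sum.elim u fun j => single 1 1 * v j) := fun _ hw =>
  eq_zero_of_le_orderTop_imp_add_one (add_one_le_orderTop_of_sum_eq_zero hu hv hu₀ hv₀ hw)

end Springer

/-- Reindexes the diagonal of `φ₁` as `(⟨x + 1⟩ ⊥ q') ⊥ x · (-q)`. -/
def finSuccSumFinSuccEquiv (n : ℕ) : Fin (n + 1) ⊕ Fin (n + 1) ≃ Fin 2 ⊕ Fin 2 × Fin n where
  toFun := Sum.elim (Fin.cons (.inl 0) fun i => .inr (0, i))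
    (Fin.cons (.inl 1) fun i => .inr (1, i))
  invFun := Sum.elim ![.inl 0, .inr 0] fun p => ![Sum.inl, Sum.inr] p.1 p.2.succ
  left_inv := by rintro (i | i) <;> cases i using Fin.cases <;> rfl
  right_inv := by
    rintro (j | ⟨j, i⟩)
    all_goals fin_cases j <;> rfl

open HahnSeries in
theorem phi_one_anisotropic_over_laurent_series_general
    {k : Type*} [Field k] {n : ℕ} (q' : Fin n → k)
    (hq : Anisotropic (Fin.cons 1 q' : Fin (n + 1) → k)) :
    Anisotropic (Sum.elim
      (![(HahnSeries.single (1 : ℤ) (1 : k) : LaurentSeries k) + 1,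
         -(HahnSeries.single (1 : ℤ) (1 : k) : LaurentSeries k)])
      (fun p : Fin 2 × Fin n =>
        ![(1 : LaurentSeries k),
          -(HahnSeries.single (1 : ℤ) (1 : k) : LaurentSeries k)] p.1 *
          HahnSeries.C (q' p.2))) := by
  set q : Fin (n + 1) → k := Fin.cons 1 q'
  let u : Fin (n + 1) → LaurentSeries k := Fin.cons (single 1 1 + 1) fun i => C (q' i)
  have hC (r : k) : 0 ≤ (C r : LaurentSeries k).orderTop := by
    exact_mod_cast C_apply (Γ := ℤ) r ▸ orderTop_single_le
  have hu (i : Fin (n + 1)) : 0 ≤ (u i).orderTop := by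
    cases i using Fin.cases
    · exact (le_min ((WithTop.coe_nonneg.mpr zero_le_one).trans orderTop_single_le)
        orderTop_one.ge).trans min_orderTop_le_orderTop_add
    · exact hC _
  have hu₀ : (fun i => (u i).coeff 0) = q := by
    funext i
    cases i using Fin.cases <;> simp [u, q, C_apply, coeff_one]
  refine .of_comp_equiv (finSuccSumFinSuccEquiv n) ?_
  convert anisotropic_sumElim_single_one_mul (u := u) (v := fun j => -C (q j)) hu
    (fun j => by simpa only [orderTop_neg] using hC (q j)) (hu₀ ▸ hq)
    (by simpa [C_apply] using hq.neg) using 1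
  funext x
  rcases x with i | i <;> cases i using Fin.cases <;> simp [u, q, finSuccSumFinSuccEquiv]

/-- let `q ≃ ⟨1⟩ ⊥ q'` be anisotropic over `k` (char ≠ 2).  Then
`φ₁ = ⟨x₂ + 1, -x₂⟩ ⊥ ⟨1, -x₂⟩ ⊗ q'` is anisotropic over `k((x₂))`.  Here `x₂` is the
Laurent series variable. -/
theorem phi_one_anisotropic_over_laurent_series
    {k : Type*} [Field k] (hk : (2 : k) ≠ 0) {n : ℕ} (q' : Fin n → k)
    (hq : Anisotropic (Fin.cons 1 q' : Fin (n + 1) → k)) :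
    Anisotropic (Sum.elim
      (![(HahnSeries.single (1 : ℤ) (1 : k) : LaurentSeries k) + 1,
         -(HahnSeries.single (1 : ℤ) (1 : k) : LaurentSeries k)])
      (fun p : Fin 2 × Fin n =>
        ![(1 : LaurentSeries k),
          -(HahnSeries.single (1 : ℤ) (1 : k) : LaurentSeries k)] p.1 *
          HahnSeries.C (q' p.2))) :=
  phi_one_anisotropic_over_laurent_series_general q' hq
end

section
/- Let $k$ be a field of characteristic $\neq 2$. Then for any $r \geq 1$, the twisted Pfister form $\langle\langle x_1, \ldots, x_r; -1 \rangle\rangle$ is anisotropic over $k(x_1, \ldots, x_r)$. -/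
open MvPolynomial

theorem Finset.eq_of_sum_single_one_add_two_nsmul_eq {σ : Type*} {S S' : Finset σ}
    {d d' : σ →₀ ℕ}
    (h : ∑ i ∈ S, Finsupp.single i 1 + 2 • d = ∑ i ∈ S', Finsupp.single i 1 + 2 • d') :
    S = S' := by
  classical
  ext i
  have hi := DFunLike.congr_fun h i
  simp only [Finsupp.add_apply, Finsupp.smul_apply, Finsupp.coe_finsetSum, Finset.sum_apply,
    Finsupp.single_apply, Finset.sum_ite_eq', smul_eq_mul] at hi
  split_ifs at hi <;> simp_all <;> omega

namespace MonomialOrder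

variable {σ R : Type*} [CommSemiring R] (m : MonomialOrder σ)

theorem sum_ne_zero_of_injOn_degree {ι : Type*} {s : Finset ι} {f : ι → MvPolynomial σ R}
    (hs : s.Nonempty) (hf : ∀ i ∈ s, f i ≠ 0) (hinj : Set.InjOn (fun i ↦ m.degree (f i)) s) :
    ∑ i ∈ s, f i ≠ 0 := by
  obtain ⟨i₀, hi₀, hmax⟩ := s.exists_max_image (fun i ↦ m.toSyn (m.degree (f i))) hs
  have hlt : ∀ i ∈ s, i ≠ i₀ → m.degree (f i) ≺[m] m.degree (f i₀) := fun i hi hne ↦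
    (hmax i hi).lt_of_ne fun h ↦ hne (hinj hi hi₀ (m.toSyn.injective h))
  intro hsum
  apply (m.leadingCoeff_ne_zero_iff.mpr (hf i₀ hi₀))
  rw [leadingCoeff, ← Finset.sum_eq_single_of_mem i₀ hi₀
    (fun i hi hne ↦ m.coeff_eq_zero_of_lt (hlt i hi hne)), ← coeff_sum, hsum, coeff_zero]

theorem degree_C_mul_prod_X_mul_sq [IsDomain R] {c : R} (hc : c ≠ 0) (S : Finset σ)
    {w : MvPolynomial σ R} (hw : w ≠ 0) :
    m.degree (C c * (∏ i ∈ S, X i) * w ^ 2) = ∑ i ∈ S, Finsupp.single i 1 + 2 • m.degree w := by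
  rw [m.degree_mul (by simp [hc, Finset.prod_ne_zero_iff, X_ne_zero]) (pow_ne_zero 2 hw),
    m.degree_mul (by simpa using hc) (Finset.prod_ne_zero_iff.mpr fun i _ ↦ X_ne_zero i),
    m.degree_C, zero_add, m.degree_prod fun i _ ↦ X_ne_zero i, m.degree_pow]
  simp [m.degree_X]

end MonomialOrder

theorem MvPolynomial.eq_zero_of_sum_C_mul_prod_X_mul_sq_eq_zero {σ R : Type*} [CommRing R]
    [IsDomain R] [Fintype σ] [LinearOrder σ] {c : Finset σ → R} (hc : ∀ S, c S ≠ 0)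
    {w : Finset σ → MvPolynomial σ R} (h : ∑ S, C (c S) * (∏ i ∈ S, X i) * w S ^ 2 = 0) :
    w = 0 := by
  classical
  by_contra hw
  set s := Finset.univ.filter fun S ↦ w S ≠ 0
  have hs : s.Nonempty := by
    obtain ⟨S, hS⟩ := Function.ne_iff.mp hw
    exact ⟨S, by simpa [s] using hS⟩
  have hw₀ : ∀ S ∈ s, w S ≠ 0 := fun S hS ↦ (Finset.mem_filter.mp hS).2
  rw [← Finset.sum_filter_of_ne (p := fun S ↦ w S ≠ 0) fun S _ hS h0 ↦ hS (by simp [h0])] at h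
  set m : MonomialOrder σ := MonomialOrder.lex
  refine m.sum_ne_zero_of_injOn_degree hs (fun S hS ↦ ?_) (fun S hS S' hS' hSS' ↦ ?_) h
  · simp [hc S, Finset.prod_ne_zero_iff, X_ne_zero, hw₀ S hS]
  · simp only [m.degree_C_mul_prod_X_mul_sq (hc _) _ (hw₀ _ hS),
      m.degree_C_mul_prod_X_mul_sq (hc _) _ (hw₀ _ hS')] at hSS'
    exact Finset.eq_of_sum_single_one_add_two_nsmul_eq hSS'

theorem anisotropic_algebraMap_of_isFractionRing {A K ι : Type*} [CommRing A] [Field K] [Algebra A K]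
    [IsFractionRing A K] [Fintype ι] (d : ι → A)
    (h : ∀ u : ι → A, ∑ i, d i * u i ^ 2 = 0 → u = 0) :
    Anisotropic fun i ↦ algebraMap A K (d i) := by
  intro w hw
  obtain ⟨b, hb⟩ := IsLocalization.exist_integer_multiples_of_finite (nonZeroDivisors A) w
  choose u hu using hb
  have hb0 : algebraMap A K b ≠ 0 := (IsLocalization.map_units K b).ne_zero
  have hu0 : u = 0 := h u <| IsFractionRing.injective A K <| by
    simp only [map_sum, map_mul, map_pow, hu, Algebra.smul_def, map_zero, mul_pow,
      mul_left_comm _ (algebraMap A K b ^ 2), ← Finset.mul_sum, hw, mul_zero]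
  funext i
  simpa [hu0, Algebra.smul_def, hb0] using (hu i).symm

theorem twisted_pfister_form_minus_one_anisotropic_general
    {k : Type*} [Field k] (r : ℕ) :
    Anisotropic (fun S : Finset (Fin r) =>
      (∏ i ∈ S, algebraMap (MvPolynomial (Fin r) k)
          (FractionRing (MvPolynomial (Fin r) k)) (MvPolynomial.X i)) *
        (if S = Finset.univ then -1 else 1)) := by
  have hform : (fun S : Finset (Fin r) ↦
      (∏ i ∈ S, algebraMap (MvPolynomial (Fin r) k)
          (FractionRing (MvPolynomial (Fin r) k)) (X i)) *
        (if S = Finset.univ then -1 else 1)) =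
      fun S ↦ algebraMap (MvPolynomial (Fin r) k) _
        (C (if S = Finset.univ then -1 else 1) * ∏ i ∈ S, X i) := by
    funext S
    split_ifs <;> simp [map_prod, mul_comm]
  rw [hform]
  exact anisotropic_algebraMap_of_isFractionRing _ fun u ↦
    eq_zero_of_sum_C_mul_prod_X_mul_sq_eq_zero fun S ↦ by split_ifs <;> simp

/-- for `k` of characteristic `≠ 2` and `r ≥ 1`, the twisted Pfister form
`⟨⟨x₁, …, x_r; -1⟩⟩`, obtained from the Pfister form `⟨⟨x₁, …, x_r⟩⟩` (with diagonal
entries `∏_{i ∈ S} x_i`, `S ⊆ {1, …, r}`) by multiplying the last entry `x₁ ⋯ x_r`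
by `-1`, is anisotropic over `k(x₁, …, x_r)`. -/
theorem twisted_pfister_form_minus_one_anisotropic
    {k : Type*} [Field k] (hk : (2 : k) ≠ 0) (r : ℕ) (hr : 1 ≤ r) :
    Anisotropic (fun S : Finset (Fin r) =>
      (∏ i ∈ S, algebraMap (MvPolynomial (Fin r) k)
          (FractionRing (MvPolynomial (Fin r) k)) (MvPolynomial.X i)) *
        (if S = Finset.univ then -1 else 1)) :=
  twisted_pfister_form_minus_one_anisotropic_general r
end

section
/- Let $k$ be a field of characteristic $\neq 2$, and for each $2 \leq i \leq r$ let $g_i(x_i) \in k[x_i]$ be a polynomial of positive degree with $g_i(0)$ a nonzero square in $k$. Then for every $r \geq 2$, the quadratic form $\varphi_r = \langle\langle x_2, \ldots, x_r \rangle\rangle' \perp \langle \prod_{i=2}^r g_i(x_i) \rangle$ is anisotropic over $k(x_2, \ldots, x_r)$. -/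
noncomputable section

/-- The rational function field `k(x₁, …, x_m)`. -/
abbrev Km (k : Type*) [Field k] (m : ℕ) := FractionRing (MvPolynomial (Fin m) k)

/-- The variable `xᵢ` in `k(x₁, …, x_m)`. -/
def xvar {k : Type*} [Field k] {m : ℕ} (i : Fin m) : Km k m :=
  algebraMap (MvPolynomial (Fin m) k) (Km k m) (MvPolynomial.X i)

namespace QuadraticMap

variable {R : Type*} [CommRing R] {ι κ : Type*} [Fintype ι] [Fintype κ]

theorem anisotropic_weightedSumSquares_iff (d : ι → R) :
    (weightedSumSquares R d).Anisotropic ↔ ∀ w : ι → R, ∑ i, d i * w i ^ 2 = 0 → w = 0 := by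
  simp only [QuadraticMap.Anisotropic, weightedSumSquares_apply, smul_eq_mul, pow_two]

theorem Anisotropic.weightedSumSquares_comp_equiv {d : ι → R}
    (h : (weightedSumSquares R d).Anisotropic) (e : κ ≃ ι) :
    (weightedSumSquares R (d ∘ e)).Anisotropic := by
  rw [anisotropic_weightedSumSquares_iff] at h ⊢
  intro w hw
  have : w ∘ e.symm = 0 := h _ <| by
    rw [← hw, ← e.sum_comp]
    simp
  funext j
  simpa using congrFun this (e j)

theorem anisotropic_weightedSumSquares_comp_equiv_iff {d : ι → R} (e : κ ≃ ι) :
    (weightedSumSquares R (d ∘ e)).Anisotropic ↔ (weightedSumSquares R d).Anisotropic := by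
  refine ⟨fun h => ?_, fun h => h.weightedSumSquares_comp_equiv e⟩
  simpa [Function.comp_def] using h.weightedSumSquares_comp_equiv e.symm

theorem Anisotropic.weightedSumSquares_of_map {S : Type*} [CommRing S] {d : ι → R} (f : R →+* S)
    (hf : Function.Injective f) (h : (weightedSumSquares S (f ∘ d)).Anisotropic) :
    (weightedSumSquares R d).Anisotropic := by
  rw [anisotropic_weightedSumSquares_iff] at h ⊢
  intro w hw
  have : f ∘ w = 0 := h _ <| by simpa [← map_pow, ← map_mul, ← map_sum] using congrArg f hw
  funext i
  exact hf (by simpa using congrFun this i)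

theorem Anisotropic.weightedSumSquares_sq_mul [IsDomain R] {d : ι → R}
    (h : (weightedSumSquares R d).Anisotropic) {c : ι → R} (hc : ∀ i, c i ≠ 0) :
    (weightedSumSquares R fun i => c i ^ 2 * d i).Anisotropic := by
  rw [anisotropic_weightedSumSquares_iff] at h ⊢
  intro w hw
  have : (fun i => c i * w i) = 0 := h _ <| by
    rw [← hw]
    exact Finset.sum_congr rfl fun i _ => by ring
  funext i
  exact (mul_eq_zero.mp (congrFun this i)).resolve_left (hc i)

theorem Anisotropic.weightedSumSquares_algebraMap (K : Type*) [Field K] [Algebra R K]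
    [IsFractionRing R K] {d : ι → R} (h : (weightedSumSquares R d).Anisotropic) :
    (weightedSumSquares K (algebraMap R K ∘ d)).Anisotropic := by
  rw [anisotropic_weightedSumSquares_iff] at h ⊢
  intro w hw
  obtain ⟨b, hb⟩ := IsLocalization.exist_integer_multiples (nonZeroDivisors R) Finset.univ w
  choose W hW using fun i => hb i (Finset.mem_univ i)
  have hb : IsUnit (algebraMap R K b) := IsLocalization.map_units K b
  have hW0 : W = 0 := h W <| IsFractionRing.injective R K <| by
    calc algebraMap R K (∑ i, d i * W i ^ 2)
        = algebraMap R K b ^ 2 * ∑ i, (algebraMap R K ∘ d) i * w i ^ 2 := by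
          simp only [map_sum, map_mul, map_pow, hW, Algebra.smul_def, Finset.mul_sum,
            Function.comp_apply]
          exact Finset.sum_congr rfl fun i _ => by ring
      _ = algebraMap R K 0 := by rw [hw, mul_zero, map_zero]
  funext i
  have := hW i
  rw [hW0, Pi.zero_apply, map_zero, Algebra.smul_def] at this
  exact (hb.mul_right_eq_zero).mp this.symm

end QuadraticMap

theorem anisotropic_iff_anisotropic_weightedSumSquares {F : Type*} [Field F] {ι : Type*}
    [Fintype ι] (d : ι → F) :
    Anisotropic d ↔ (QuadraticMap.weightedSumSquares F d).Anisotropic :=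
  (QuadraticMap.anisotropic_weightedSumSquares_iff d).symm

namespace Polynomial

open QuadraticMap

variable {R : Type*} [CommRing R] {ι κ : Type*} [Fintype ι] [Fintype κ]

theorem X_dvd_of_anisotropic_eval_zero {d w : ι → R[X]}
    (hd : (weightedSumSquares R fun i => (d i).eval 0).Anisotropic)
    (h : X ∣ ∑ i, d i * w i ^ 2) (i : ι) : X ∣ w i := by
  rw [anisotropic_weightedSumSquares_iff] at hd
  have := hd (fun i => (w i).eval 0) <| by
    simpa [X_dvd_iff, coeff_zero_eq_eval_zero, eval_finsetSum] using h
  simpa [X_dvd_iff, coeff_zero_eq_eval_zero] using congrFun this i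

theorem anisotropic_weightedSumSquares_sumElim_X_mul {u : ι → R[X]} {v : κ → R[X]}
    (hu : (weightedSumSquares R fun i => (u i).eval 0).Anisotropic)
    (hv : (weightedSumSquares R fun j => (v j).eval 0).Anisotropic) :
    (weightedSumSquares R[X] (Sum.elim u fun j => X * v j)).Anisotropic := by
  rw [anisotropic_weightedSumSquares_iff]
  set d := Sum.elim u fun j => X * v j
  have X_dvd : ∀ w : ι ⊕ κ → R[X], ∑ t, d t * w t ^ 2 = 0 → ∀ t, X ∣ w t := by
    intro w hw
    simp only [Fintype.sum_sum_type, d, Sum.elim_inl, Sum.elim_inr, mul_assoc,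
      ← Finset.mul_sum] at hw
    have hl : ∀ i, X ∣ w (.inl i) := X_dvd_of_anisotropic_eval_zero hu
      ⟨-∑ j, v j * w (.inr j) ^ 2, by linear_combination hw⟩
    choose a ha using hl
    have hsum : ∑ i, u i * w (.inl i) ^ 2 = X ^ 2 * ∑ i, u i * a i ^ 2 := by
      rw [Finset.mul_sum]
      exact Finset.sum_congr rfl fun i _ => by rw [ha]; ring
    have hr : ∀ j, X ∣ w (.inr j) := X_dvd_of_anisotropic_eval_zero hv
      ⟨-∑ i, u i * a i ^ 2, isRegular_X.left <| by linear_combination hw - hsum⟩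
    rintro (i | j)
    exacts [⟨a i, ha i⟩, hr j]
  have X_pow_dvd : ∀ (n : ℕ) (w : ι ⊕ κ → R[X]), ∑ t, d t * w t ^ 2 = 0 → ∀ t, X ^ n ∣ w t := by
    intro n
    induction n with
    | zero => simp
    | succ n ih =>
      intro w hw
      choose a ha using X_dvd w hw
      have ha0 : ∑ t, d t * a t ^ 2 = 0 := (isRegular_X_pow 2).left <| by
        change X ^ 2 * _ = X ^ 2 * 0
        rw [mul_zero, ← hw, Finset.mul_sum]
        exact Finset.sum_congr rfl fun t _ => by rw [ha t]; ring
      intro t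
      rw [ha t, pow_succ']
      exact mul_dvd_mul_left X (ih a ha0 t)
  intro w hw
  funext t
  ext n
  exact X_pow_dvd_iff.mp (X_pow_dvd (n + 1) w hw t) n n.lt_succ_self

end Polynomial

def finsetFinSuccEquiv (n : ℕ) : Finset (Fin n) ⊕ Finset (Fin n) ≃ Finset (Fin (n + 1)) where
  toFun := Sum.elim (·.map (Fin.succEmb n)) fun T => insert 0 (T.map (Fin.succEmb n))
  invFun S :=
    let T : Finset (Fin n) := {i | i.succ ∈ S}
    if 0 ∈ S then .inr T else .inl T
  left_inv := by
    rintro (T | T) <;> simp [Fin.succ_ne_zero, eq_comm]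
  right_inv S := by
    by_cases h0 : 0 ∈ S <;> ext j <;> cases j using Fin.cases <;>
      simp [h0, Fin.succ_ne_zero, eq_comm]

@[simp] theorem finsetFinSuccEquiv_inr (n : ℕ) (T : Finset (Fin n)) :
    finsetFinSuccEquiv n (.inr T) = insert 0 (T.map (Fin.succEmb n)) := rfl

namespace MvPolynomial

variable {k : Type*} [CommRing k] {m : ℕ}

theorem finSuccEquiv_prod_X_map_succEmb (T : Finset (Fin m)) :
    finSuccEquiv k m (∏ i ∈ T.map (Fin.succEmb m), X i) = Polynomial.C (∏ i ∈ T, X i) := by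
  simp [Finset.prod_map, finSuccEquiv_X_succ]

theorem finSuccEquiv_prod_X_insert_zero_map_succEmb (T : Finset (Fin m)) :
    finSuccEquiv k m (∏ i ∈ insert 0 (T.map (Fin.succEmb m)), X i) =
      Polynomial.X * Polynomial.C (∏ i ∈ T, X i) := by
  rw [Finset.prod_insert (by simp [Fin.succ_ne_zero]), map_mul, finSuccEquiv_X_zero,
    finSuccEquiv_prod_X_map_succEmb]

theorem eval_zero_finSuccEquiv_prod_aeval_X (g : Fin (m + 1) → Polynomial k) :
    (finSuccEquiv k m (∏ i, Polynomial.aeval (X i) (g i))).eval 0 =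
      C ((g 0).eval 0) * ∏ i, Polynomial.aeval (X i) (g i.succ) := by
  rw [Fin.prod_univ_succ, map_mul, Polynomial.eval_mul, ← Polynomial.aeval_algHom_apply,
    finSuccEquiv_X_zero, ← Polynomial.aeval_map_algebraMap (MvPolynomial (Fin m) k),
    Polynomial.aeval_X_left_apply, Polynomial.eval_zero_map, algebraMap_eq, map_prod,
    Polynomial.eval_prod]
  congr 1
  refine Finset.prod_congr rfl fun i _ => ?_
  rw [← Polynomial.aeval_algHom_apply, finSuccEquiv_X_succ]
  exact (congrArg (Polynomial.eval 0)
    (Polynomial.aeval_algHom_apply Polynomial.CAlgHom (X i) (g i.succ))).trans Polynomial.eval_C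

open QuadraticMap

/-- The diagonal of `⟨⟨X₀, …, X_{m-1}⟩⟩' ⊥ ⟨G⟩`, with `G` in place of the Pfister form's entry
`1` at `S = ∅`. -/
def pfisterDiagWith (G : MvPolynomial (Fin m) k) : Finset (Fin m) → MvPolynomial (Fin m) k :=
  Function.update (fun S => ∏ i ∈ S, X i) ∅ G

@[simp] theorem pfisterDiagWith_one :
    pfisterDiagWith (1 : MvPolynomial (Fin m) k) = fun S => ∏ i ∈ S, X i := by
  simp [pfisterDiagWith]

theorem anisotropic_pfisterDiagWith_prod_aeval [IsDomain k] (m : ℕ) (g : Fin m → Polynomial k)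
    (hg : ∀ i, ∃ c : k, c ≠ 0 ∧ (g i).eval 0 = c ^ 2) :
    (weightedSumSquares (MvPolynomial (Fin m) k)
      (pfisterDiagWith (∏ i, Polynomial.aeval (X i : MvPolynomial (Fin m) k) (g i)))
      ).Anisotropic := by
  induction m with
  | zero =>
    rw [anisotropic_weightedSumSquares_iff]
    intro w hw
    simp [pfisterDiagWith, Subsingleton.elim (default : Finset (Fin 0)) ∅] at hw
    funext S
    rwa [Subsingleton.elim S ∅]
  | succ m ih =>
    obtain ⟨c, hc, hgc⟩ := hg 0
    set d := pfisterDiagWith (∏ i, Polynomial.aeval (X i : MvPolynomial (Fin (m + 1)) k) (g i))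
    set u : Finset (Fin m) → Polynomial (MvPolynomial (Fin m) k) :=
      fun T => finSuccEquiv k m (d (T.map (Fin.succEmb m)))
    set v : Finset (Fin m) → Polynomial (MvPolynomial (Fin m) k) :=
      fun T => Polynomial.C (∏ i ∈ T, X i)
    have hu : (weightedSumSquares (MvPolynomial (Fin m) k) fun T => (u T).eval 0).Anisotropic := by
      have : (fun T => (u T).eval 0) = fun T =>
          Function.update (1 : Finset (Fin m) → MvPolynomial (Fin m) k) ∅ (C c) T ^ 2 *
          pfisterDiagWith (∏ i, Polynomial.aeval (X i : MvPolynomial (Fin m) k) (g i.succ)) T := by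
        funext T
        rcases eq_or_ne T ∅ with rfl | hT
        · simp only [u, d, Finset.map_empty, pfisterDiagWith, Function.update_self]
          rw [eval_zero_finSuccEquiv_prod_aeval_X, hgc, map_pow]
        · have hT' : T.map (Fin.succEmb m) ≠ ∅ := by simpa using hT
          simp only [u, d, pfisterDiagWith, Function.update_of_ne hT, Function.update_of_ne hT',
            finSuccEquiv_prod_X_map_succEmb, Polynomial.eval_C, Pi.one_apply, one_pow, one_mul]
      rw [this]
      refine (ih _ fun i => hg i.succ).weightedSumSquares_sq_mul fun T => ?_
      rcases eq_or_ne T ∅ with rfl | hT <;> simp [*]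
    have hv : (weightedSumSquares (MvPolynomial (Fin m) k) fun T => (v T).eval 0).Anisotropic := by
      have : (fun T => (v T).eval 0) = pfisterDiagWith 1 := by
        simp only [v, Polynomial.eval_C, pfisterDiagWith_one]
      rw [this]
      simpa using ih 1 fun _ => ⟨1, one_ne_zero, by simp⟩
    have hsplit : finSuccEquiv k m ∘ d ∘ finsetFinSuccEquiv m =
        Sum.elim u fun T => Polynomial.X * v T := by
      funext t
      rcases t with T | T
      · rfl
      · simp only [Function.comp_apply, finsetFinSuccEquiv_inr, Sum.elim_inr, d, pfisterDiagWith,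
          Function.update_of_ne (Finset.insert_ne_empty _ _)]
        exact finSuccEquiv_prod_X_insert_zero_map_succEmb T
    refine .weightedSumSquares_of_map (finSuccEquiv k m).toRingHom (finSuccEquiv k m).injective ?_
    rw [← anisotropic_weightedSumSquares_comp_equiv_iff (finsetFinSuccEquiv m)]
    exact hsplit ▸ Polynomial.anisotropic_weightedSumSquares_sumElim_X_mul hu hv

end MvPolynomial

theorem pure_pfister_with_product_entry_anisotropic_general
    {k : Type*} [Field k] (m : ℕ)
    (g : Fin m → Polynomial k)
    (hsq : ∀ i, ∃ c : k, c ≠ 0 ∧ (g i).eval 0 = c ^ 2) :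
    Anisotropic (Sum.elim
      (fun S : {S : Finset (Fin m) // S ≠ ∅} => ∏ i ∈ S.1, xvar (k := k) i)
      (fun _ : Unit => ∏ i, algebraMap (MvPolynomial (Fin m) k) (Km k m)
        (Polynomial.aeval (MvPolynomial.X i : MvPolynomial (Fin m) k) (g i)))) := by
  let e : {S : Finset (Fin m) // S ≠ ∅} ⊕ Unit ≃ Finset (Fin m) :=
    (Equiv.optionEquivSumPUnit _).symm.trans (Equiv.optionSubtypeNe ∅)
  have h := ((MvPolynomial.anisotropic_pfisterDiagWith_prod_aeval m g hsq
    ).weightedSumSquares_comp_equiv e).weightedSumSquares_algebraMap (Km k m)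
  rw [anisotropic_iff_anisotropic_weightedSumSquares]
  convert h using 2
  funext t
  rcases t with ⟨S, hS⟩ | _
  · simp [e, MvPolynomial.pfisterDiagWith, hS, xvar]
  · simp [e, MvPolynomial.pfisterDiagWith]

/-- let `k` have characteristic `≠ 2`, and for each of the `m = r - 1 ≥ 1`
variables (here relabelled `x₂, …, x_r` as `Fin m`) let `gᵢ ∈ k[xᵢ]` have positive degree
with `gᵢ(0)` a nonzero square in `k`.  Then the form
`φ_r = ⟨⟨x₂, …, x_r⟩⟩' ⊥ ⟨∏ᵢ gᵢ(xᵢ)⟩`, whose diagonal entries are `∏_{i ∈ S} xᵢ` for the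
nonempty subsets `S` (the pure subform of the Pfister form) together with the entry
`∏ᵢ gᵢ(xᵢ)`, is anisotropic over `k(x₂, …, x_r)`. -/
theorem pure_pfister_with_product_entry_anisotropic
    {k : Type*} [Field k] (hk : (2 : k) ≠ 0) (m : ℕ) (hm : 1 ≤ m)
    (g : Fin m → Polynomial k)
    (hdeg : ∀ i, 0 < (g i).natDegree)
    (hsq : ∀ i, ∃ c : k, c ≠ 0 ∧ (g i).eval 0 = c ^ 2) :
    Anisotropic (Sum.elim
      (fun S : {S : Finset (Fin m) // S ≠ ∅} => ∏ i ∈ S.1, xvar (k := k) i)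
      (fun _ : Unit => ∏ i, algebraMap (MvPolynomial (Fin m) k) (Km k m)
        (Polynomial.aeval (MvPolynomial.X i : MvPolynomial (Fin m) k) (g i)))) :=
  pure_pfister_with_product_entry_anisotropic_general m g hsq

end
end

section
/- Let $\ell$ be a field of characteristic $\neq 2$, let $a_1, \ldots, a_i \in \ell^\times$ with $-a_1 \cdots a_i$ not a square in $\ell$, and consider the irreducible polynomial $\pi = x^2 + a_1 \cdots a_i \in \ell[x]$. Then any quadratic form over $\ell(x)$ containing the subform $\langle a_1, a_2 \cdots a_i \rangle$ is isotropic over the $\pi$-adic completion $\ell(x)_\pi$. -/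
/-!
In the `π`-adic completion `2` and `X` are units and `X² ≡ -a₁ ⋯ a_m` modulo `π`, so Newton's
iteration for a square root of `-a₁ ⋯ a_m` started at `X` converges quadratically: `-a₁ ⋯ a_m` is
a square `s²` there. Then `a₁ (s / a₁)² + a₂ ⋯ a_m = (s² + a₁ ⋯ a_m) / a₁ = 0`.
-/

open IsDedekindDomain

/-- A diagonal quadratic form (given by its diagonal entries `d`) is isotropic. -/
def Isotropic {F : Type*} [Field F] {ι : Type*} [Fintype ι] (d : ι → F) : Prop :=
  ∃ w : ι → F, w ≠ 0 ∧ ∑ i, d i * w i ^ 2 = 0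

open Filter Topology

section Isotropic

variable {F : Type*} [Field F]

theorem Isotropic.of_comp_inl {ι κ : Type*} [Fintype ι] [Fintype κ] {d : ι ⊕ κ → F}
    (h : Isotropic (d ∘ Sum.inl)) : Isotropic d := by
  obtain ⟨w, hw, hsum⟩ := h
  refine ⟨Sum.elim w 0, fun h ↦ hw (funext fun i ↦ congrFun h (Sum.inl i)), ?_⟩
  simpa [Fintype.sum_sum_type] using hsum

theorem isotropic_of_isSquare_neg_mul (d : Fin 2 → F) (h0 : d 0 ≠ 0)
    (h : IsSquare (-(d 0 * d 1))) : Isotropic d := by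
  obtain ⟨s, hs⟩ := h
  refine ⟨![s / d 0, 1], fun h ↦ one_ne_zero (congrFun h 1), ?_⟩
  simp only [Fin.sum_univ_two, Matrix.cons_val_zero, Matrix.cons_val_one]
  field_simp
  linear_combination -hs

end Isotropic

namespace Valued

variable {R L Γ₀ : Type*} [LinearOrderedCommGroupWithZero Γ₀]

instance nonarchimedeanAddGroup [Ring R] [Valued R Γ₀] : NonarchimedeanAddGroup R where
  is_nonarchimedean U hU := by
    obtain ⟨γ, -, hγ⟩ := (hasBasis_nhds_zero R Γ₀).mem_iff.mp hU
    exact ⟨⟨v.restrict.ltAddSubgroup γ, isOpen_ball R γ.1⟩, hγ⟩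

theorem tendsto_zero_of_v_le_pow [Ring R] [Valued R Γ₀] [MulArchimedean Γ₀] {x : ℕ → R} {γ : Γ₀}
    (hγ : γ < 1) (hx : ∀ k, v (x k) ≤ γ ^ k) : Tendsto x atTop (𝓝 0) := by
  rw [(hasBasis_nhds_zero R Γ₀).tendsto_right_iff]
  intro δ _
  obtain ⟨N, hN⟩ := exists_pow_lt₀ hγ
    (Units.map (MonoidWithZeroHom.ValueGroup₀.embedding (f := .ofClass (v : Valuation R Γ₀))) δ)
  filter_upwards [eventually_ge_atTop N] with k hk
  rw [Valuation.restrict_lt_iff_lt_embedding]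
  exact ((hx k).trans (pow_le_pow_right_of_le_one' hγ.le hk)).trans_lt hN

/-- The Newton step `x ↦ x - f x / f' x` for `f = X² - c`. -/
def sqrtNewton [Field L] (c x : L) : L :=
  x - (x ^ 2 - c) / (2 * x)

variable [Field L] [Valued L Γ₀]

theorem v_sqrtNewton {c x : L} (h2 : v (2 : L) = 1) (hx : v x = 1) (hc : v (x ^ 2 - c) < 1) :
    v (sqrtNewton c x) = 1 ∧ v (sqrtNewton c x ^ 2 - c) = v (x ^ 2 - c) ^ 2 ∧
      v (sqrtNewton c x - x) = v (x ^ 2 - c) := by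
  have hx0 : x ≠ 0 := v.ne_zero_iff.mp (by simp [hx])
  have h20 : (2 : L) ≠ 0 := v.ne_zero_iff.mp (by simp [h2])
  have hcorr : v ((x ^ 2 - c) / (2 * x)) = v (x ^ 2 - c) := by
    rw [map_div₀, map_mul, h2, hx, one_mul, div_one]
  refine ⟨?_, ?_, ?_⟩
  · rw [sqrtNewton, v.map_sub_eq_of_lt_left (by rwa [hcorr, hx]), hx]
  · have : sqrtNewton c x ^ 2 - c = ((x ^ 2 - c) / (2 * x)) ^ 2 := by
      rw [sqrtNewton]; field_simp; ring
    rw [this, map_pow, hcorr]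
  · rw [sqrtNewton, sub_sub_cancel_left, Valuation.map_neg, hcorr]

/-- Hensel's lemma for `X² - c`. -/
theorem isSquare_of_v_sq_sub_lt_one [MulArchimedean Γ₀] [CompleteSpace L] {c t : L}
    (h2 : v (2 : L) = 1) (ht : v t = 1) (hc : v (t ^ 2 - c) < 1) : IsSquare c := by
  set γ := v (t ^ 2 - c)
  set u : ℕ → L := fun k ↦ (sqrtNewton c)^[k] t
  have hu : ∀ k, u (k + 1) = sqrtNewton c (u k) := fun k ↦ Function.iterate_succ_apply' _ k t
  have hsmall : ∀ k, γ ^ 2 ^ k < 1 := fun k ↦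
    (pow_le_of_le_one zero_le hc.le (by positivity)).trans_lt hc
  have hγ : ∀ k, γ ^ 2 ^ k ≤ γ ^ k := fun k ↦
    pow_le_pow_right_of_le_one' hc.le Nat.lt_two_pow_self.le
  have key : ∀ k, v (u k) = 1 ∧ v (u k ^ 2 - c) ≤ γ ^ 2 ^ k := by
    intro k
    induction k with
    | zero => exact ⟨ht, by simp [u, γ]⟩
    | succ k ih =>
      obtain ⟨h1, hsq, -⟩ := v_sqrtNewton h2 ih.1 (ih.2.trans_lt (hsmall k))
      refine ⟨hu k ▸ h1, ?_⟩
      rw [hu, hsq, pow_succ 2 k, pow_mul]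
      exact pow_le_pow_left₀ zero_le ih.2 2
  have hdiff : Tendsto (fun k ↦ u (k + 1) - u k) atTop (𝓝 0) := by
    refine tendsto_zero_of_v_le_pow hc fun k ↦ ?_
    rw [hu, (v_sqrtNewton h2 (key k).1 ((key k).2.trans_lt (hsmall k))).2.2]
    exact (key k).2.trans (hγ k)
  have herr : Tendsto (fun k ↦ u k ^ 2 - c) atTop (𝓝 0) :=
    tendsto_zero_of_v_le_pow hc fun k ↦ (key k).2.trans (hγ k)
  obtain ⟨s, hs⟩ := cauchySeq_tendsto_of_complete
    (NonarchimedeanAddGroup.cauchySeq_of_tendsto_sub_nhds_zero hdiff)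
  refine ⟨s, ?_⟩
  have : s ^ 2 - c = 0 := tendsto_nhds_unique ((hs.pow 2).sub_const c) herr
  linear_combination -this

end Valued

section RatFunc

open Polynomial

variable {ℓ : Type*} [Field ℓ] {c : ℓ} {v : HeightOneSpectrum ℓ[X]}

theorem valued_v_algebraMap_eq_one_of_natDegree_lt {π q : ℓ[X]}
    (hv : v.asIdeal = Ideal.span {π}) (hq : q ≠ 0) (hdeg : q.natDegree < π.natDegree) :
    Valued.v (algebraMap ℓ[X] (v.adicCompletion (RatFunc ℓ)) q) = 1 := by
  simp only [HeightOneSpectrum.valuedAdicCompletion_eq_valuation,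
    HeightOneSpectrum.valuation_of_algebraMap, HeightOneSpectrum.intValuation_eq_one_iff, hv,
    Ideal.mem_span_singleton]
  exact not_dvd_of_natDegree_lt hq hdeg

theorem isSquare_neg_C_of_asIdeal_eq_span_X_sq_add_C (hl : (2 : ℓ) ≠ 0)
    (hv : v.asIdeal = Ideal.span {X ^ 2 + C c}) :
    IsSquare (-algebraMap (RatFunc ℓ) (v.adicCompletion (RatFunc ℓ)) (RatFunc.C c)) := by
  have hdeg : (X ^ 2 + C c : ℓ[X]).natDegree = 2 := natDegree_X_pow_add_C
  refine Valued.isSquare_of_v_sq_sub_lt_one (t := algebraMap ℓ[X] _ X) ?_ ?_ ?_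
  · have h2 : (2 : ℓ[X]) ≠ 0 := by simpa [← C_ofNat] using hl
    have := valued_v_algebraMap_eq_one_of_natDegree_lt hv h2 (by simp [hdeg])
    rwa [map_ofNat] at this
  · exact valued_v_algebraMap_eq_one_of_natDegree_lt hv X_ne_zero (by simp [hdeg])
  · rw [sub_neg_eq_add, ← RatFunc.algebraMap_C, ← IsScalarTower.algebraMap_apply, ← map_pow,
      ← map_add, HeightOneSpectrum.valuedAdicCompletion_eq_valuation,
      HeightOneSpectrum.valuation_of_algebraMap, HeightOneSpectrum.intValuation_lt_one_iff_mem, hv]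
    exact Ideal.mem_span_singleton_self _

end RatFunc

theorem subform_isotropic_over_pi_adic_completion_general
    {ℓ : Type*} [Field ℓ] (hl : (2 : ℓ) ≠ 0) (m : ℕ) (hm : 0 < m)
    (a : Fin m → ℓ) (ha : ∀ j, a j ≠ 0)
    (v : HeightOneSpectrum (Polynomial ℓ))
    (hv : v.asIdeal = Ideal.span {Polynomial.X ^ 2 + Polynomial.C (∏ j, a j)})
    {n : ℕ} (ρ : Fin n → RatFunc ℓ) :
    Isotropic (fun idx : Fin 2 ⊕ Fin n =>
      algebraMap (RatFunc ℓ) (v.adicCompletion (RatFunc ℓ))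
        (Sum.elim
          ![RatFunc.C (a ⟨0, hm⟩),
            RatFunc.C (∏ j ∈ Finset.univ.filter (fun j => j ≠ (⟨0, hm⟩ : Fin m)), a j)]
          ρ idx)) := by
  have hsplit : a ⟨0, hm⟩ * ∏ j ∈ Finset.univ.filter (fun j => j ≠ ⟨0, hm⟩), a j = ∏ j, a j := by
    rw [Finset.filter_ne', Finset.mul_prod_erase _ _ (Finset.mem_univ _)]
  refine Isotropic.of_comp_inl (isotropic_of_isSquare_neg_mul _ ?_ ?_)
  · simpa using ha _
  · have := isSquare_neg_C_of_asIdeal_eq_span_X_sq_add_C hl hv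
    rwa [← hsplit, map_mul, map_mul] at this

/-- let `ℓ` have characteristic `≠ 2`, let `a₁, …, a_m ∈ ℓ^×` with
`-a₁ ⋯ a_m` not a square, and let `π = x² + a₁ ⋯ a_m ∈ ℓ[x]` (irreducible), inducing the
`π`-adic valuation on `ℓ(x)` via the height-one prime `(π)` of `ℓ[x]`.  Then any quadratic
form over `ℓ(x)` containing the subform `⟨a₁, a₂ ⋯ a_m⟩` is isotropic over the `π`-adic
completion `ℓ(x)_π`. -/
theorem subform_isotropic_over_pi_adic_completion
    {ℓ : Type*} [Field ℓ] (hl : (2 : ℓ) ≠ 0) (m : ℕ) (hm : 0 < m)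
    (a : Fin m → ℓ) (ha : ∀ j, a j ≠ 0)
    (hns : ∀ c : ℓ, c ^ 2 ≠ -∏ j, a j)
    (v : HeightOneSpectrum (Polynomial ℓ))
    (hv : v.asIdeal = Ideal.span {Polynomial.X ^ 2 + Polynomial.C (∏ j, a j)})
    {n : ℕ} (ρ : Fin n → RatFunc ℓ) :
    Isotropic (fun idx : Fin 2 ⊕ Fin n =>
      algebraMap (RatFunc ℓ) (v.adicCompletion (RatFunc ℓ))
        (Sum.elim
          ![RatFunc.C (a ⟨0, hm⟩),
            RatFunc.C (∏ j ∈ Finset.univ.filter (fun j => j ≠ (⟨0, hm⟩ : Fin m)), a j)]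
          ρ idx)) :=
  subform_isotropic_over_pi_adic_completion_general hl m hm a ha v hv ρ
end

section
/- Let $k$ be a field of characteristic $\neq 2$ and let $q$ be a quadratic form over $k$ representing $1$, say $q \simeq \langle 1 \rangle \perp q'$. If $q$ is anisotropic, then the form $\langle x+1 \rangle \perp q' \perp x \cdot (-q)$ over $k((x))$ is anisotropic. -/
/-- A Laurent series of nonnegative order is a power series. -/
lemma mem_range_ofPowerSeries_aux17 {k : Type*} [Field k] (f : LaurentSeries k)
    (hf : 0 ≤ f.order) : ∃ F : PowerSeries k, (HahnSeries.ofPowerSeries ℤ k F) = f :=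
  ⟨PowerSeries.X ^ f.order.toNat * f.powerSeriesPart,
    LaurentSeries.X_order_mul_powerSeriesPart (by simp [Int.toNat_of_nonneg hf])⟩

/-- The power-series-level core of the Springer argument. -/
lemma aux17_powerSeries {k : Type*} [Field k] {n : ℕ} (q' : Fin n → k)
    (hq : Anisotropic (Fin.cons 1 q' : Fin (n + 1) → k))
    (W : Unit ⊕ (Fin n ⊕ Fin (n + 1)) → PowerSeries k)
    (hW : ∑ i, (Sum.elim (fun _ : Unit => (PowerSeries.X + 1 : PowerSeries k))
        (Sum.elim (fun j : Fin n => PowerSeries.C (q' j))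
          (fun j : Fin (n + 1) =>
            PowerSeries.X * (-(PowerSeries.C ((Fin.cons 1 q' : Fin (n + 1) → k) j)))))) i
        * W i ^ 2 = 0) :
    ∀ i, PowerSeries.constantCoeff (W i) = 0 := by
  classical
  set cc := PowerSeries.constantCoeff (R := k) with hcc
  -- Step 1: reduce mod X.
  have h1 : ∑ i : Fin (n + 1), (Fin.cons 1 q' : Fin (n + 1) → k) i *
      (Fin.cons (cc (W (Sum.inl ())))
        (fun j : Fin n => cc (W (Sum.inr (Sum.inl j)))) : Fin (n + 1) → k) i ^ 2 = 0 := by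
    have h := congrArg cc hW
    simp only [hcc, map_sum, map_mul, map_pow, map_add, map_neg, Fintype.sum_sum_type,
      Sum.elim_inl, Sum.elim_inr, PowerSeries.constantCoeff_X, PowerSeries.constantCoeff_C,
      map_one, zero_add, one_mul, zero_mul, map_zero, Finset.sum_const_zero, add_zero,
      Finset.univ_unique, Finset.sum_singleton] at h
    rw [Fin.sum_univ_succ]
    simp only [Fin.cons_zero, Fin.cons_succ, one_mul]
    exact h
  have ha := hq _ h1
  have hW0 : cc (W (Sum.inl ())) = 0 := by
    have := congrFun ha 0
    simpa using this
  have hWj : ∀ j : Fin n, cc (W (Sum.inr (Sum.inl j))) = 0 := by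
    intro j
    have := congrFun ha j.succ
    simpa using this
  -- Step 2: divide by X.
  obtain ⟨U₀, hU₀⟩ : (PowerSeries.X : PowerSeries k) ∣ W (Sum.inl ()) :=
    PowerSeries.X_dvd_iff.mpr hW0
  have hUj : ∀ j : Fin n, ∃ u : PowerSeries k, W (Sum.inr (Sum.inl j)) = PowerSeries.X * u :=
    fun j => PowerSeries.X_dvd_iff.mpr (hWj j)
  choose U hU using hUj
  set V : Fin (n + 1) → PowerSeries k := fun j => W (Sum.inr (Sum.inr j)) with hV
  have h2 : PowerSeries.X *
      ((PowerSeries.X + 1) * PowerSeries.X * U₀ ^ 2 +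
        PowerSeries.X * (∑ j : Fin n, PowerSeries.C (q' j) * U j ^ 2) -
        ∑ j : Fin (n + 1), PowerSeries.C ((Fin.cons 1 q' : Fin (n + 1) → k) j) * V j ^ 2)
      = 0 := by
    rw [← hW]
    simp only [Fintype.sum_sum_type, Sum.elim_inl, Sum.elim_inr, Finset.univ_unique,
      Finset.sum_singleton, hU₀]
    simp only [hU]
    rw [show (∑ j : Fin n, PowerSeries.C (q' j) * (PowerSeries.X * U j) ^ 2) =
        PowerSeries.X * (PowerSeries.X * ∑ j : Fin n, PowerSeries.C (q' j) * U j ^ 2) by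
      rw [Finset.mul_sum, Finset.mul_sum]
      exact Finset.sum_congr rfl fun j _ => by ring]
    rw [show (∑ j : Fin (n + 1), PowerSeries.X *
          (-(PowerSeries.C ((Fin.cons 1 q' : Fin (n + 1) → k) j))) * V j ^ 2) =
        -(PowerSeries.X * ∑ j : Fin (n + 1),
          PowerSeries.C ((Fin.cons 1 q' : Fin (n + 1) → k) j) * V j ^ 2) by
      rw [Finset.mul_sum, ← Finset.sum_neg_distrib]
      exact Finset.sum_congr rfl fun j _ => by ring]
    ring
  have h3 : (PowerSeries.X + 1) * PowerSeries.X * U₀ ^ 2 +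
      PowerSeries.X * (∑ j : Fin n, PowerSeries.C (q' j) * U j ^ 2) -
      ∑ j : Fin (n + 1), PowerSeries.C ((Fin.cons 1 q' : Fin (n + 1) → k) j) * V j ^ 2 = 0 := by
    rcases mul_eq_zero.mp h2 with h | h
    · exact absurd h PowerSeries.X_ne_zero
    · exact h
  -- Step 3: reduce mod X again.
  have h4 : ∑ j : Fin (n + 1), (Fin.cons 1 q' : Fin (n + 1) → k) j * cc (V j) ^ 2 = 0 := by
    have h := congrArg cc h3
    simp only [hcc, map_sub, map_add, map_mul, map_pow, map_sum,
      PowerSeries.constantCoeff_X, PowerSeries.constantCoeff_C, zero_mul, mul_zero,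
      add_zero, zero_add, map_zero, zero_sub, neg_eq_zero] at h
    exact h
  have hb := hq _ h4
  have hVj : ∀ j : Fin (n + 1), cc (V j) = 0 := fun j => congrFun hb j
  -- Conclusion.
  rintro (⟨⟩ | j | j)
  · exact hW0
  · exact hWj j
  · exact hVj j

/-- let `q ≃ ⟨1⟩ ⊥ q'` be an anisotropic form over `k` (char ≠ 2)
representing `1`.  Then the form `⟨x + 1⟩ ⊥ q' ⊥ x · (-q)` over `k((x))`, where `x` is
the uniformizer of `k((x))`, is anisotropic. -/
theorem form_x_plus_one_q_prime_minus_q_anisotropic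
    {k : Type*} [Field k] (hk : (2 : k) ≠ 0) {n : ℕ} (q' : Fin n → k)
    (hq : Anisotropic (Fin.cons 1 q' : Fin (n + 1) → k)) :
    Anisotropic (Sum.elim
      (fun _ : Unit => (HahnSeries.single (1 : ℤ) (1 : k) : LaurentSeries k) + 1)
      (Sum.elim
        (fun j : Fin n => (HahnSeries.C (q' j) : LaurentSeries k))
        (fun j : Fin (n + 1) =>
          (HahnSeries.single (1 : ℤ) (1 : k) : LaurentSeries k) *
            (-(HahnSeries.C ((Fin.cons 1 q' : Fin (n + 1) → k) j) : LaurentSeries k))))) := by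
  classical
  set d : Unit ⊕ (Fin n ⊕ Fin (n + 1)) → LaurentSeries k := Sum.elim
      (fun _ : Unit => (HahnSeries.single (1 : ℤ) (1 : k) : LaurentSeries k) + 1)
      (Sum.elim
        (fun j : Fin n => (HahnSeries.C (q' j) : LaurentSeries k))
        (fun j : Fin (n + 1) =>
          (HahnSeries.single (1 : ℤ) (1 : k) : LaurentSeries k) *
            (-(HahnSeries.C ((Fin.cons 1 q' : Fin (n + 1) → k) j) : LaurentSeries k)))) with hd
  intro w hw
  by_contra hne
  have hex : ∃ i, w i ≠ 0 := by
    by_contra h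
    push_neg at h
    exact hne (funext h)
  obtain ⟨i₀, hi₀0⟩ := hex
  obtain ⟨j₀, hj₀, hmin⟩ := Finset.exists_min_image
    ((Finset.univ : Finset (Unit ⊕ (Fin n ⊕ Fin (n + 1)))).filter fun i => w i ≠ 0)
    (fun i => (w i).order) ⟨i₀, Finset.mem_filter.mpr ⟨Finset.mem_univ _, hi₀0⟩⟩
  rw [Finset.mem_filter] at hj₀
  have hj₀ne : w j₀ ≠ 0 := hj₀.2
  set m : ℤ := (w j₀).order with hm
  set s : LaurentSeries k := HahnSeries.single (-m) (1 : k) with hs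
  have hsne : s ≠ 0 := HahnSeries.single_ne_zero one_ne_zero
  set w' : Unit ⊕ (Fin n ⊕ Fin (n + 1)) → LaurentSeries k := fun i => s * w i with hw'def
  have hw'sum : ∑ i, d i * w' i ^ 2 = 0 := by
    have : ∑ i, d i * w' i ^ 2 = s ^ 2 * ∑ i, d i * w i ^ 2 := by
      rw [Finset.mul_sum]
      exact Finset.sum_congr rfl fun i _ => by rw [hw'def]; ring
    rw [this, hw, mul_zero]
  have hw'range : ∀ i, ∃ F : PowerSeries k, (HahnSeries.ofPowerSeries ℤ k F) = w' i := by
    intro i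
    by_cases hi : w i = 0
    · exact ⟨0, by simp [hw'def, hi]⟩
    · refine mem_range_ofPowerSeries_aux17 _ ?_
      rw [hw'def]
      rw [HahnSeries.order_mul hsne hi, hs, HahnSeries.order_single one_ne_zero]
      have : m ≤ (w i).order := hmin i (Finset.mem_filter.mpr ⟨Finset.mem_univ _, hi⟩)
      omega
  choose W hW using hw'range
  -- transfer the equation to power series
  have hDW : ∑ i, (Sum.elim (fun _ : Unit => (PowerSeries.X + 1 : PowerSeries k))
      (Sum.elim (fun j : Fin n => PowerSeries.C (q' j))
        (fun j : Fin (n + 1) =>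
          PowerSeries.X * (-(PowerSeries.C ((Fin.cons 1 q' : Fin (n + 1) → k) j)))))) i
      * W i ^ 2 = 0 := by
    apply HahnSeries.ofPowerSeries_injective (Γ := ℤ) (R := k)
    rw [map_sum, map_zero]
    rw [← hw'sum]
    apply Finset.sum_congr rfl
    rintro (⟨⟩ | j | j) _
    · simp only [map_mul, map_pow, map_add, map_one, HahnSeries.ofPowerSeries_X, hW, hd,
        Sum.elim_inl]
    · simp only [map_mul, map_pow, HahnSeries.ofPowerSeries_C, hW, hd, Sum.elim_inr,
        Sum.elim_inl]
    · simp only [map_mul, map_pow, map_neg, HahnSeries.ofPowerSeries_X,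
        HahnSeries.ofPowerSeries_C, hW, hd, Sum.elim_inr]
  have hall := aux17_powerSeries q' hq W hDW
  -- contradiction at index j₀
  have hordw' : (w' j₀).order = 0 := by
    rw [hw'def, HahnSeries.order_mul hsne hj₀ne, hs, HahnSeries.order_single one_ne_zero]
    omega
  have hw'ne : w' j₀ ≠ 0 := mul_ne_zero hsne hj₀ne
  have hcoeff : (w' j₀).coeff 0 ≠ 0 := by
    have := mt HahnSeries.coeff_order_eq_zero.mp hw'ne
    rwa [hordw'] at this
  apply hcoeff
  rw [← hW j₀]
  have : ((HahnSeries.ofPowerSeries ℤ k (W j₀)).coeff ((0 : ℕ) : ℤ)) =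
      PowerSeries.coeff 0 (W j₀) := LaurentSeries.coeff_coe_powerSeries _ _
  simpa [PowerSeries.coeff_zero_eq_constantCoeff, hall j₀] using this
end
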